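/- arXiv:1612.08447 — 5 statements merged into one kernel-verified Lean document; each statement's English description precedes it below -/
import Mathlib

section
/- Let M be a finite collection of motif instances in a graph on vertex set V, each with an anchor set of exactly 3 vertices. Let W_M be the motif adjacency matrix with (W_M)_{ij} = number of instances whose anchor set contains both i and j (i≠j). Define the motif cut cut_M(S,S̄) = number of instances whose anchor set intersects both S and its complement S̄, and the weighted cut cut_{W_M}(S,S̄) = Σ_{i∈S,j∈S̄} (W_M)_{ij}. Then for every S ⊆ V, cut_M(S,S̄) = cut_{W_M}(S,S̄)/2. -/
theorem stmt_7 (V : Type*) [Fintype V] [DecidableEq V]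
    (N : ℕ) (inst : Fin N → Finset V)
    (hcard : ∀ m, (inst m).card = 3)
    (W : V → V → ℕ)
    (hW : ∀ i j, W i j = if i = j then 0 else
      (Finset.univ.filter (fun m => i ∈ inst m ∧ j ∈ inst m)).card)
    (S : Finset V) :
    (((Finset.univ.filter
        (fun m => (inst m ∩ S).Nonempty ∧ (inst m ∩ Sᶜ).Nonempty)).card : ℕ) : ℚ) =
      ((∑ i ∈ S, ∑ j ∈ Sᶜ, W i j : ℕ) : ℚ) / 2 := by
  have key : (∑ i ∈ S, ∑ j ∈ Sᶜ, W i j) =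
      2 * (Finset.univ.filter
        (fun m => (inst m ∩ S).Nonempty ∧ (inst m ∩ Sᶜ).Nonempty)).card := by
    have step1 : (∑ i ∈ S, ∑ j ∈ Sᶜ, W i j) =
        ∑ m : Fin N, (inst m ∩ S).card * (inst m ∩ Sᶜ).card := by
      have hrw : ∀ i ∈ S, ∀ j ∈ Sᶜ, W i j =
          ∑ m : Fin N, (if i ∈ inst m then 1 else 0) * (if j ∈ inst m then 1 else 0) := by
        intro i hi j hj
        have hij : i ≠ j := fun h => (Finset.mem_compl.mp hj) (h ▸ hi)
        rw [hW, if_neg hij, Finset.card_filter]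
        congr 1; ext m
        by_cases h1 : i ∈ inst m <;> by_cases h2 : j ∈ inst m <;> simp [h1, h2]
      calc (∑ i ∈ S, ∑ j ∈ Sᶜ, W i j)
          = ∑ i ∈ S, ∑ j ∈ Sᶜ, ∑ m : Fin N,
              (if i ∈ inst m then 1 else 0) * (if j ∈ inst m then 1 else 0) := by
            apply Finset.sum_congr rfl; intro i hi
            exact Finset.sum_congr rfl (fun j hj => hrw i hi j hj)
        _ = ∑ m : Fin N, ∑ i ∈ S, ∑ j ∈ Sᶜ,
              (if i ∈ inst m then 1 else 0) * (if j ∈ inst m then 1 else 0) := by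
            rw [show (∑ i ∈ S, ∑ j ∈ Sᶜ, ∑ m : Fin N,
              (if i ∈ inst m then 1 else 0) * (if j ∈ inst m then 1 else 0)) =
              ∑ i ∈ S, ∑ m : Fin N, ∑ j ∈ Sᶜ,
              (if i ∈ inst m then 1 else 0) * (if j ∈ inst m then 1 else 0) from
              Finset.sum_congr rfl (fun i _ => Finset.sum_comm)]
            exact Finset.sum_comm
        _ = ∑ m : Fin N, (inst m ∩ S).card * (inst m ∩ Sᶜ).card := by
            apply Finset.sum_congr rfl; intro m _
            rw [← Finset.sum_mul_sum]
            rw [Finset.sum_ite_mem, Finset.sum_ite_mem]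
            simp [Finset.inter_comm]
    rw [step1, Finset.card_filter, Finset.mul_sum]
    apply Finset.sum_congr rfl
    intro m _
    have hsum : (inst m ∩ S).card + (inst m ∩ Sᶜ).card = 3 := by
      have : inst m ∩ S ∪ inst m ∩ Sᶜ = inst m := by
        ext x; simp [Finset.mem_inter, Finset.mem_compl]; tauto
      have hd : Disjoint (inst m ∩ S) (inst m ∩ Sᶜ) := by
        apply Finset.disjoint_left.mpr
        intro x hx hy
        exact (Finset.mem_compl.mp (Finset.mem_inter.mp hy).2) (Finset.mem_inter.mp hx).2
      rw [← Finset.card_union_of_disjoint hd, this, hcard]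
    by_cases h1 : (inst m ∩ S).Nonempty <;> by_cases h2 : (inst m ∩ Sᶜ).Nonempty
    · have a1 : 1 ≤ (inst m ∩ S).card := Finset.card_pos.mpr h1
      have a2 : 1 ≤ (inst m ∩ Sᶜ).card := Finset.card_pos.mpr h2
      simp only [h1, h2, and_self, if_true]
      set a := (inst m ∩ S).card with ha
      have hub : a ≤ 3 := by omega
      interval_cases a <;> omega
    · simp only [h1, h2, and_false, if_false]
      rw [Finset.not_nonempty_iff_eq_empty.mp h2]; simp
    · simp only [h1, h2, false_and, if_false]
      rw [Finset.not_nonempty_iff_eq_empty.mp h1]; simp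
    · simp only [h1, h2, false_and, if_false]
      rw [Finset.not_nonempty_iff_eq_empty.mp h1]; simp
  rw [key]
  push_cast
  ring
end

section
/- Let M be a finite collection of size-3 anchor sets over a vertex set V, with motif adjacency matrix W_M. Define motif conductance φ_M(S) = cut_M(S,S̄)/min(vol_M(S), vol_M(S̄)), where cut_M counts instances with anchors on both sides of the partition and vol_M(S) counts anchor-vertex incidences in S. Define the edge conductance φ(S) of S in the weighted graph with adjacency matrix W_M analogously using weighted cut and weighted degree volume. Then φ_M(S) = φ(S) for all S with 0 < vol_M(S) and 0 < vol_M(S̄). -/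
theorem stmt_8 (V : Type*) [Fintype V] [DecidableEq V]
    (N : ℕ) (inst : Fin N → Finset V)
    (hcard : ∀ m, (inst m).card = 3)
    (W : V → V → ℕ)
    (hW : ∀ i j, W i j = if i = j then 0 else
      (Finset.univ.filter (fun m => i ∈ inst m ∧ j ∈ inst m)).card)
    (S : Finset V)
    (volM : Finset V → ℕ) (hvolM : ∀ T, volM T = ∑ m, (inst m ∩ T).card)
    (cutM : ℕ)
    (hcutM : cutM = (Finset.univ.filter
        (fun m => (inst m ∩ S).Nonempty ∧ (inst m ∩ Sᶜ).Nonempty)).card)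
    (volW : Finset V → ℕ) (hvolW : ∀ T, volW T = ∑ i ∈ T, ∑ j, W i j)
    (cutW : ℕ) (hcutW : cutW = ∑ i ∈ S, ∑ j ∈ Sᶜ, W i j)
    (hS : 0 < volM S) (hSc : 0 < volM Sᶜ) :
    (cutM : ℚ) / min (volM S) (volM Sᶜ) =
      (cutW : ℚ) / min (volW S) (volW Sᶜ) := by
  -- rewrite W as a sum of indicators
  have hW' : ∀ i j, W i j = ∑ m, if i ≠ j ∧ i ∈ inst m ∧ j ∈ inst m then 1 else 0 := by
    intro i j
    rw [hW]
    by_cases h : i = j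
    · simp [h]
    · rw [if_neg h, Finset.card_filter]
      exact Finset.sum_congr rfl (fun m _ => by simp [h])
  -- volumes: volW T = 2 * volM T
  have hvol : ∀ T : Finset V, volW T = 2 * volM T := by
    intro T
    rw [hvolW, hvolM, Finset.mul_sum]
    have : ∀ i ∈ T, ∑ j, W i j = ∑ m, if i ∈ inst m then 2 else 0 := by
      intro i _
      rw [Finset.sum_congr rfl (fun j _ => hW' i j), Finset.sum_comm]
      refine Finset.sum_congr rfl (fun m _ => ?_)
      by_cases h : i ∈ inst m
      · rw [if_pos h]
        have : ∀ j, (if i ≠ j ∧ i ∈ inst m ∧ j ∈ inst m then 1 else 0)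
            = if j ∈ (inst m).erase i then 1 else 0 := by
          intro j
          by_cases hj : j ∈ (inst m).erase i
          · rw [if_pos hj]
            rw [Finset.mem_erase] at hj
            rw [if_pos ⟨fun e => hj.1 e.symm, h, hj.2⟩]
          · rw [if_neg hj, if_neg]
            rw [Finset.mem_erase] at hj
            rintro ⟨h1, _, h3⟩
            exact hj ⟨fun e => h1 e.symm, h3⟩
        rw [Finset.sum_congr rfl (fun j _ => this j)]
        rw [Finset.sum_ite_mem, Finset.univ_inter, Finset.sum_const, smul_eq_mul, mul_one,
          Finset.card_erase_of_mem h, hcard]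
      · rw [if_neg h]
        refine Finset.sum_eq_zero (fun j _ => ?_)
        rw [if_neg]
        rintro ⟨_, h2, _⟩
        exact h h2
    rw [Finset.sum_congr rfl this, Finset.sum_comm]
    refine Finset.sum_congr rfl (fun m _ => ?_)
    rw [Finset.sum_ite_mem]
    simp [Finset.inter_comm, mul_comm]
  -- cut: cutW = 2 * cutM
  have hcut : cutW = 2 * cutM := by
    rw [hcutW, hcutM, Finset.card_filter, Finset.mul_sum]
    have : (∑ i ∈ S, ∑ j ∈ Sᶜ, W i j)
        = ∑ m, ((inst m ∩ S).card * (inst m ∩ Sᶜ).card) := by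
      have h1 : ∀ i ∈ S, ∀ j ∈ Sᶜ, W i j
          = ∑ m, (if i ∈ inst m ∩ S then 1 else 0) * (if j ∈ inst m ∩ Sᶜ then 1 else 0) := by
        intro i hi j hj
        rw [hW' i j]
        refine Finset.sum_congr rfl (fun m _ => ?_)
        have hij : i ≠ j := by
          intro e; subst e
          exact (Finset.mem_compl.mp hj) hi
        by_cases h2 : i ∈ inst m ∧ j ∈ inst m
        · rw [if_pos ⟨hij, h2⟩, if_pos (Finset.mem_inter.mpr ⟨h2.1, hi⟩),
            if_pos (Finset.mem_inter.mpr ⟨h2.2, hj⟩)]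
        · rw [if_neg (fun h => h2 h.2)]
          rcases not_and_or.mp h2 with h3 | h3
          · rw [if_neg (fun h => h3 (Finset.mem_inter.mp h).1), zero_mul]
          · rw [if_neg (fun h => h3 (Finset.mem_inter.mp h).1), mul_zero]
      calc (∑ i ∈ S, ∑ j ∈ Sᶜ, W i j)
          = ∑ i ∈ S, ∑ j ∈ Sᶜ, ∑ m,
            (if i ∈ inst m ∩ S then (1:ℕ) else 0) * (if j ∈ inst m ∩ Sᶜ then (1:ℕ) else 0) := by
            exact Finset.sum_congr rfl (fun i hi => Finset.sum_congr rfl (fun j hj => h1 i hi j hj))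
        _ = ∑ m, (∑ i ∈ S, if i ∈ inst m ∩ S then (1:ℕ) else 0)
              * (∑ j ∈ Sᶜ, if j ∈ inst m ∩ Sᶜ then (1:ℕ) else 0) := by
            rw [Finset.sum_congr rfl (fun m (_ : m ∈ Finset.univ) =>
              Finset.sum_mul_sum S Sᶜ (fun i => if i ∈ inst m ∩ S then (1:ℕ) else 0)
                (fun j => if j ∈ inst m ∩ Sᶜ then (1:ℕ) else 0))]
            exact (Finset.sum_congr rfl fun i _ => Finset.sum_comm).trans Finset.sum_comm
        _ = ∑ m, ((inst m ∩ S).card * (inst m ∩ Sᶜ).card) := by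
            refine Finset.sum_congr rfl (fun m _ => ?_)
            rw [Finset.sum_ite_mem, Finset.sum_ite_mem,
              Finset.inter_eq_right.mpr Finset.inter_subset_right,
              Finset.inter_eq_right.mpr Finset.inter_subset_right]
            simp
    rw [this]
    refine Finset.sum_congr rfl (fun m _ => ?_)
    have hsplit : (inst m ∩ S).card + (inst m ∩ Sᶜ).card = 3 := by
      rw [show inst m ∩ Sᶜ = inst m \ S from (sdiff_eq).symm, ← hcard m]
      exact Finset.card_inter_add_card_sdiff _ _
    by_cases h1 : (inst m ∩ S).Nonempty
    · by_cases h2 : (inst m ∩ Sᶜ).Nonempty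
      · rw [if_pos ⟨h1, h2⟩]
        have ha := Finset.card_pos.mpr h1
        have hb := Finset.card_pos.mpr h2
        have : (inst m ∩ S).card = 1 ∧ (inst m ∩ Sᶜ).card = 2 ∨
            (inst m ∩ S).card = 2 ∧ (inst m ∩ Sᶜ).card = 1 := by omega
        rcases this with ⟨e1, e2⟩ | ⟨e1, e2⟩ <;> rw [e1, e2] <;> ring
      · rw [if_neg (fun h => h2 h.2), Finset.not_nonempty_iff_eq_empty.mp h2]
        simp
    · rw [if_neg (fun h => h1 h.1), Finset.not_nonempty_iff_eq_empty.mp h1]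
      simp
  rw [hcut, hvol, hvol]
  have h2 : ((2:ℚ)) ≠ 0 := by norm_num
  push_cast
  have hmin : min ((2:ℚ) * volM S) (2 * volM Sᶜ) = 2 * min (volM S : ℚ) (volM Sᶜ) := by
    rcases le_total ((volM S : ℚ)) (volM Sᶜ) with h | h
    · rw [min_eq_left h, min_eq_left (by linarith)]
    · rw [min_eq_right h, min_eq_right (by linarith)]
  rw [hmin, mul_div_mul_left _ _ h2]
end

section
/- Let M be a finite collection of size-4 anchor sets over vertex set V, with motif adjacency matrix W_M defined by pairwise co-occurrence counts. Then for any S ⊆ V, the motif cut satisfies cut_M(S,S̄) = (1/3)·cut_{W_M}(S,S̄) − (1/3)·#{instances with exactly two of their four anchor vertices in S}. -/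
theorem stmt_9 (V : Type*) [Fintype V] [DecidableEq V]
    (N : ℕ) (inst : Fin N → Finset V)
    (hcard : ∀ m, (inst m).card = 4)
    (W : V → V → ℕ)
    (hW : ∀ i j, W i j = if i = j then 0 else
      (Finset.univ.filter (fun m => i ∈ inst m ∧ j ∈ inst m)).card)
    (S : Finset V) :
    (((Finset.univ.filter
        (fun m => (inst m ∩ S).Nonempty ∧ (inst m ∩ Sᶜ).Nonempty)).card : ℕ) : ℚ) =
      ((∑ i ∈ S, ∑ j ∈ Sᶜ, W i j : ℕ) : ℚ) / 3 -
      (((Finset.univ.filter (fun m => (inst m ∩ S).card = 2)).card : ℕ) : ℚ) / 3 := by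
  have key : (∑ i ∈ S, ∑ j ∈ Sᶜ, W i j) =
      3 * (Finset.univ.filter
        (fun m => (inst m ∩ S).Nonempty ∧ (inst m ∩ Sᶜ).Nonempty)).card +
      (Finset.univ.filter (fun m => (inst m ∩ S).card = 2)).card := by
    have h1 : (∑ i ∈ S, ∑ j ∈ Sᶜ, W i j) =
        ∑ m : Fin N, (inst m ∩ S).card * (inst m ∩ Sᶜ).card := by
      have step : ∀ i ∈ S, ∀ j ∈ Sᶜ, W i j =
          ∑ m : Fin N, (if i ∈ inst m then 1 else 0) * (if j ∈ inst m then 1 else 0) := by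
        intro i hi j hj
        have hij : i ≠ j := fun h => (Finset.mem_compl.mp hj) (h ▸ hi)
        rw [hW, if_neg hij, Finset.card_filter]
        refine Finset.sum_congr rfl fun m _ => ?_
        by_cases h1 : i ∈ inst m <;> by_cases h2 : j ∈ inst m <;> simp [h1, h2]
      calc (∑ i ∈ S, ∑ j ∈ Sᶜ, W i j)
          = ∑ i ∈ S, ∑ j ∈ Sᶜ, ∑ m : Fin N,
              (if i ∈ inst m then 1 else 0) * (if j ∈ inst m then 1 else 0) :=
            Finset.sum_congr rfl fun i hi =>
              Finset.sum_congr rfl fun j hj => step i hi j hj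
        _ = ∑ i ∈ S, ∑ m : Fin N, ∑ j ∈ Sᶜ,
              (if i ∈ inst m then 1 else 0) * (if j ∈ inst m then 1 else 0) :=
            Finset.sum_congr rfl fun i _ => Finset.sum_comm
        _ = ∑ m : Fin N, ∑ i ∈ S, ∑ j ∈ Sᶜ,
              (if i ∈ inst m then 1 else 0) * (if j ∈ inst m then 1 else 0) :=
            Finset.sum_comm
        _ = ∑ m : Fin N, (inst m ∩ S).card * (inst m ∩ Sᶜ).card := by
            refine Finset.sum_congr rfl fun m _ => ?_
            rw [← Finset.sum_mul_sum]
            congr 1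
            · rw [Finset.sum_ite_mem]
              simp [Finset.inter_comm]
            · rw [Finset.sum_ite_mem]
              simp [Finset.inter_comm]
    have h2 : ∀ m : Fin N, (inst m ∩ S).card * (inst m ∩ Sᶜ).card =
        3 * (if (inst m ∩ S).Nonempty ∧ (inst m ∩ Sᶜ).Nonempty then 1 else 0) +
        (if (inst m ∩ S).card = 2 then 1 else 0) := by
      intro m
      have hsd : inst m ∩ Sᶜ = inst m \ S := by
        ext x; simp [Finset.mem_sdiff]
      have hsum : (inst m ∩ S).card + (inst m ∩ Sᶜ).card = 4 := by
        rw [hsd, Finset.card_inter_add_card_sdiff, hcard]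
      simp only [← Finset.card_pos]
      set a := (inst m ∩ S).card with ha'
      have hle : a ≤ 4 := by omega
      interval_cases a <;> split_ifs <;> first | contradiction | omega
    rw [h1, Finset.sum_congr rfl fun m _ => h2 m, Finset.sum_add_distrib,
      ← Finset.mul_sum]
    congr 1
    · congr 1
      rw [Finset.card_filter]
    · rw [Finset.card_filter]
  rw [key]
  push_cast
  ring
end

section
/- Let M be a finite collection of weighted motif instances over V, each with anchor set of size 3 and nonnegative weight ω_m. Define (W_M)_{ij} = Σ_{m : {i,j} ⊆ anchors(m)} ω_m for i ≠ j. Then for any S ⊆ V, the weighted motif cut Σ_m ω_m·[anchors(m) meets both S and S̄] equals (1/2)·Σ_{i∈S, j∈S̄} (W_M)_{ij}. -/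
theorem stmt_18 (V : Type*) [Fintype V] [DecidableEq V]
    (N : ℕ) (anc : Fin N → Finset V) (hcard : ∀ m, (anc m).card = 3)
    (ω : Fin N → ℝ) (hω : ∀ m, 0 ≤ ω m)
    (W : V → V → ℝ)
    (hW : ∀ i j, W i j = if i = j then 0 else
      ∑ m ∈ Finset.univ.filter (fun m => i ∈ anc m ∧ j ∈ anc m), ω m)
    (S : Finset V) :
    (∑ m, ω m * (if (anc m ∩ S).Nonempty ∧ (anc m ∩ Sᶜ).Nonempty then 1 else 0)) =
      (1 / 2) * ∑ i ∈ S, ∑ j ∈ Sᶜ, W i j := by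
  have step1 : ∑ i ∈ S, ∑ j ∈ Sᶜ, W i j
      = ∑ i ∈ S, ∑ j ∈ Sᶜ, ∑ m, (if i ∈ anc m ∧ j ∈ anc m then ω m else 0) := by
    refine Finset.sum_congr rfl fun i hi => Finset.sum_congr rfl fun j hj => ?_
    have hij : i ≠ j := by
      intro h; subst h; exact (Finset.mem_compl.mp hj) hi
    rw [hW, if_neg hij, Finset.sum_filter]
  have step2 : ∑ i ∈ S, ∑ j ∈ Sᶜ, ∑ m, (if i ∈ anc m ∧ j ∈ anc m then ω m else 0)
      = ∑ m, (((anc m ∩ S).card : ℝ) * ((anc m ∩ Sᶜ).card : ℝ) * ω m) := by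
    have swap1 : ∀ i, (∑ j ∈ Sᶜ, ∑ m, (if i ∈ anc m ∧ j ∈ anc m then ω m else 0))
        = ∑ m, ∑ j ∈ Sᶜ, (if i ∈ anc m ∧ j ∈ anc m then ω m else 0) := fun i =>
      Finset.sum_comm
    simp only [swap1]
    rw [Finset.sum_comm]
    refine Finset.sum_congr rfl fun m _ => ?_
    have hrw : ∀ i j : V, (if i ∈ anc m ∧ j ∈ anc m then ω m else 0)
        = (if i ∈ anc m then (1:ℝ) else 0) * ((if j ∈ anc m then (1:ℝ) else 0) * ω m) := by
      intro i j
      by_cases h1 : i ∈ anc m <;> by_cases h2 : j ∈ anc m <;> simp [h1, h2]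
    simp only [hrw]
    simp only [← Finset.mul_sum]
    rw [← Finset.sum_mul, ← Finset.sum_mul, Finset.sum_boole, Finset.sum_boole]
    have e1 : S.filter (· ∈ anc m) = anc m ∩ S := by
      ext x; simp [Finset.mem_filter, Finset.mem_inter, and_comm]
    have e2 : Sᶜ.filter (· ∈ anc m) = anc m ∩ Sᶜ := by
      ext x; simp [Finset.mem_filter, Finset.mem_inter, and_comm]
    rw [e1, e2]; ring
  rw [step1, step2, Finset.mul_sum]
  refine Finset.sum_congr rfl fun m _ => ?_
  have hsd : anc m ∩ Sᶜ = anc m \ S := by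
    ext x; simp [Finset.mem_compl, Finset.mem_sdiff]
  have hab : (anc m ∩ S).card + (anc m ∩ Sᶜ).card = 3 := by
    rw [hsd, Finset.card_inter_add_card_sdiff, hcard]
  by_cases h : (anc m ∩ S).Nonempty ∧ (anc m ∩ Sᶜ).Nonempty
  · have ha := Finset.card_pos.mpr h.1
    have hb := Finset.card_pos.mpr h.2
    have h2 : (anc m ∩ S).card * (anc m ∩ Sᶜ).card = 2 := by
      have ha2 : (anc m ∩ S).card ≤ 2 := by omega
      interval_cases h3 : (anc m ∩ S).card <;> omega
    rw [if_pos h]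
    rw [show ((anc m ∩ S).card : ℝ) * ((anc m ∩ Sᶜ).card : ℝ) = 2 by
      rw [← Nat.cast_mul, h2]; norm_num]
    ring
  · rw [if_neg h]
    rcases not_and_or.mp h with h1 | h1 <;>
      rw [Finset.not_nonempty_iff_eq_empty.mp h1] <;> simp
end

section
/- Let G be a simple undirected graph with m edges. The number of triangles in G is at most m^{3/2}. -/
open Finset SimpleGraph

theorem stmt_19 (V : Type*) [Fintype V] [DecidableEq V]
    (G : SimpleGraph V) [DecidableRel G.Adj] :
    ((G.cliqueFinset 3).card : ℝ) ≤ (G.edgeFinset.card : ℝ) ^ ((3 : ℝ) / 2) := by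
  classical
  set m := G.edgeFinset.card with hm
  -- the finset of triangles containing v
  set T := G.cliqueFinset 3 with hT
  -- Step 1: double counting
  have h1 : 3 * T.card = ∑ v : V, (T.filter (fun t => v ∈ t)).card := by
    simp_rw [Finset.card_filter]
    rw [Finset.sum_comm]
    have : ∀ t ∈ T, (∑ v : V, if v ∈ t then 1 else 0) = 3 := by
      intro t ht
      rw [Finset.sum_ite_mem, Finset.univ_inter, Finset.sum_const, smul_eq_mul, mul_one]
      exact (SimpleGraph.mem_cliqueFinset_iff.mp ht).2
    rw [Finset.sum_congr rfl this, Finset.sum_const, smul_eq_mul, mul_comm]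
  -- Step 2: per-vertex bound
  have h2 : ∀ v : V, (T.filter (fun t => v ∈ t)).card ≤ min m ((G.degree v) ^ 2) := by
    intro v
    set A := (T.filter (fun t => v ∈ t)).image (fun t => t.erase v) with hA
    have hinj : Set.InjOn (fun t => Finset.erase t v) ↑(T.filter (fun t => v ∈ t)) := by
      intro t1 h1' t2 h2' h
      simp only [Finset.coe_filter, Set.mem_setOf_eq, Finset.mem_coe] at h1' h2'
      rw [← Finset.insert_erase h1'.2, ← Finset.insert_erase h2'.2]
      simp only at h
      rw [h]
    have hcard : (T.filter (fun t => v ∈ t)).card = A.card :=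
      (Finset.card_image_of_injOn hinj).symm
    -- properties of elements of A
    have hAmem : ∀ s ∈ A, s.card = 2 ∧ s ⊆ G.neighborFinset v ∧
        ∃ a b, a ≠ b ∧ G.Adj a b ∧ s = {a, b} := by
      intro s hs
      simp only [hA, Finset.mem_image, Finset.mem_filter] at hs
      obtain ⟨t, ⟨htT, hvt⟩, rfl⟩ := hs
      have hclq := SimpleGraph.mem_cliqueFinset_iff.mp htT
      have hcard2 : (t.erase v).card = 2 := by
        rw [Finset.card_erase_of_mem hvt, hclq.2]
      refine ⟨hcard2, ?_, ?_⟩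
      · intro w hw
        rw [SimpleGraph.mem_neighborFinset]
        have hwt : w ∈ t := Finset.mem_of_mem_erase hw
        have hwv : w ≠ v := Finset.ne_of_mem_erase hw
        exact hclq.1 hvt hwt (Ne.symm hwv)
      · obtain ⟨a, b, hab, habe⟩ := Finset.card_eq_two.mp hcard2
        refine ⟨a, b, hab, ?_, habe⟩
        have ha : a ∈ t := Finset.mem_of_mem_erase (habe ▸ Finset.mem_insert_self a {b})
        have hb : b ∈ t := Finset.mem_of_mem_erase (habe ▸ Finset.mem_insert_of_mem (Finset.mem_singleton_self b))
        exact hclq.1 ha hb hab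
    -- A.card ≤ m via surjection from edges
    have hAm : A.card ≤ m := by
      apply Finset.card_le_card_of_surjOn
        (Sym2.lift ⟨fun a b => ({a, b} : Finset V), fun a b => Finset.pair_comm a b⟩)
      intro s hs
      obtain ⟨-, -, a, b, hab, hadj, rfl⟩ := hAmem s (Finset.mem_coe.mp hs)
      exact ⟨s(a, b), SimpleGraph.mem_edgeFinset.mpr hadj, rfl⟩
    -- A.card ≤ degree^2
    have hAd : A.card ≤ (G.degree v) ^ 2 := by
      have hsub : A ⊆ (G.neighborFinset v).powersetCard 2 := by
        intro s hs
        obtain ⟨hc2, hsubn, -⟩ := hAmem s hs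
        exact Finset.mem_powersetCard.mpr ⟨hsubn, hc2⟩
      calc A.card ≤ ((G.neighborFinset v).powersetCard 2).card := Finset.card_le_card hsub
        _ = (G.degree v).choose 2 := by rw [Finset.card_powersetCard, G.card_neighborFinset_eq_degree]
        _ ≤ (G.degree v) ^ 2 := by
            rw [Nat.choose_two_right, pow_two]
            exact le_trans (Nat.div_le_self _ _) (Nat.mul_le_mul_left _ (Nat.sub_le _ _))
    rw [hcard]
    exact le_min hAm hAd
  have key : 3 * T.card ≤ ∑ v : V, min m ((G.degree v) ^ 2) := by
    rw [h1]; exact Finset.sum_le_sum fun v _ => h2 v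
  -- real analysis
  set s := Real.sqrt (m : ℝ) with hs
  have hs0 : 0 ≤ s := Real.sqrt_nonneg _
  have hs2 : s ^ 2 = (m : ℝ) := Real.sq_sqrt (Nat.cast_nonneg m)
  have hrhs : ((m : ℝ)) ^ ((3 : ℝ) / 2) = s ^ 3 := by
    rw [show (3 : ℝ) / 2 = (1 / 2) * 3 by ring,
      Real.rpow_mul (Nat.cast_nonneg m), ← Real.sqrt_eq_rpow,
      show (3 : ℝ) = ((3 : ℕ) : ℝ) by norm_num, Real.rpow_natCast]
  rw [hrhs]
  -- cast key to ℝ and bound each min term by degree * s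
  have hkeyR : 3 * (T.card : ℝ) ≤ ∑ v : V, ((min m ((G.degree v) ^ 2) : ℕ) : ℝ) := by
    calc 3 * (T.card : ℝ) = ((3 * T.card : ℕ) : ℝ) := by push_cast; ring
      _ ≤ _ := by
        rw [← Nat.cast_sum]
        exact_mod_cast key
  have hterm : ∀ v : V, ((min m ((G.degree v) ^ 2) : ℕ) : ℝ) ≤ (G.degree v : ℝ) * s := by
    intro v
    have hd0 : (0 : ℝ) ≤ (G.degree v : ℝ) := Nat.cast_nonneg _
    rcases le_total (m : ℝ) ((G.degree v : ℝ) ^ 2) with h | h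
    · have hmin : ((min m ((G.degree v) ^ 2) : ℕ) : ℝ) ≤ (m : ℝ) := by
        exact_mod_cast min_le_left _ _
      have hsd : s ≤ (G.degree v : ℝ) := by
        nlinarith [hs2]
      nlinarith
    · have hmin : ((min m ((G.degree v) ^ 2) : ℕ) : ℝ) ≤ ((G.degree v : ℝ)) ^ 2 := by
        have : ((min m ((G.degree v) ^ 2) : ℕ) : ℝ) ≤ (((G.degree v) ^ 2 : ℕ) : ℝ) := by
          exact_mod_cast min_le_right _ _
        simp only [Nat.cast_pow] at this; exact this
      have hds : (G.degree v : ℝ) ≤ s := by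
        nlinarith [hs2]
      nlinarith
  have hsum : ∑ v : V, ((min m ((G.degree v) ^ 2) : ℕ) : ℝ) ≤ 2 * (m : ℝ) * s := by
    calc ∑ v : V, ((min m ((G.degree v) ^ 2) : ℕ) : ℝ)
        ≤ ∑ v : V, (G.degree v : ℝ) * s := Finset.sum_le_sum fun v _ => hterm v
      _ = (∑ v : V, (G.degree v : ℝ)) * s := by rw [← Finset.sum_mul]
      _ = 2 * (m : ℝ) * s := by
          have := G.sum_degrees_eq_twice_card_edges
          have : (∑ v : V, (G.degree v : ℝ)) = 2 * (m : ℝ) := by exact_mod_cast congrArg (Nat.cast : ℕ → ℝ) this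
          rw [this]
  have hfin : 3 * (T.card : ℝ) ≤ 2 * s ^ 3 := by
    have : 2 * (m : ℝ) * s = 2 * s ^ 3 := by rw [← hs2]; ring
    linarith [le_trans hkeyR hsum, this ▸ le_trans hkeyR hsum]
  nlinarith [hs0, pow_nonneg hs0 3]
end
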